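/- Let s_1,…,s_4 ∈ ℝ³ form an unlucky stack with respect to m_1,…,m_4 ∈ ℝ³. Then for every (θ, a, b, c) ∈ ℝ⁴, writing φ = φ_{θ,a,b,c} for the corresponding hovering motion and D_{i,j} = ‖m_i − m_j‖² (which equals ‖φ(m_i) − φ(m_j)‖²), one has f_D(‖s_1 − φ(m_1)‖², ‖s_2 − φ(m_2)‖², ‖s_3 − φ(m_3)‖², ‖s_4 − φ(m_4)‖²) = 0. In other words, for an unlucky stack the Cayley–Menger relation is satisfied at every vehicle position, so the echoes behave exactly as echoes from a single ghost mirror point. -/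

import Mathlib

set_option maxHeartbeats 1000000

/-- The Cayley–Menger polynomial `f_D`. -/
noncomputable def cayleyMenger (D : Fin 4 → Fin 4 → ℝ) (u : Fin 4 → ℝ) : ℝ :=
  Matrix.det (Matrix.of
    ![![0,    u 0,    u 1,    u 2,    u 3,    1],
      ![u 0,  D 0 0,  D 0 1,  D 0 2,  D 0 3,  1],
      ![u 1,  D 1 0,  D 1 1,  D 1 2,  D 1 3,  1],
      ![u 2,  D 2 0,  D 2 1,  D 2 2,  D 2 3,  1],
      ![u 3,  D 3 0,  D 3 1,  D 3 2,  D 3 3,  1],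
      ![1,    1,      1,      1,      1,      0]])

/-- The hovering motion `φ_{θ,a,b,c} : ℝ³ → ℝ³`,
`(x, y, z) ↦ (x cos θ − y sin θ + a, x sin θ + y cos θ + b, z + c)`. -/
noncomputable def hoveringMotion (θ a b c : ℝ) (v : EuclideanSpace ℝ (Fin 3)) :
    EuclideanSpace ℝ (Fin 3) :=
  WithLp.toLp 2 ![v 0 * Real.cos θ - v 1 * Real.sin θ + a,
  v 0 * Real.sin θ + v 1 * Real.cos θ + b,
    v 2 + c]

/-- Points `s₁, …, s₄ ∈ ℝ³` form an *unlucky stack* with respect to `m₁, …, m₄ ∈ ℝ³`. -/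
def UnluckyStack (s m : Fin 4 → EuclideanSpace ℝ (Fin 3)) : Prop :=
  (∀ i j : Fin 4, s i 0 = s j 0) ∧ (∀ i j : Fin 4, s i 1 = s j 1) ∧
    (∀ i j : Fin 4, s j 2 - s i 2 = 2 * (m j 2 - m i 2))

/- Auxiliary evaluation lemmas for vectors of length 6. -/
lemma vec6_0 {α : Type*} (a b c d e f : α) : ![a,b,c,d,e,f] 0 = a := rfl
lemma vec6_1 {α : Type*} (a b c d e f : α) : ![a,b,c,d,e,f] 1 = b := rfl
lemma vec6_2 {α : Type*} (a b c d e f : α) : ![a,b,c,d,e,f] 2 = c := rfl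
lemma vec6_3 {α : Type*} (a b c d e f : α) : ![a,b,c,d,e,f] 3 = d := rfl
lemma vec6_4 {α : Type*} (a b c d e f : α) : ![a,b,c,d,e,f] 4 = e := rfl
lemma vec6_5 {α : Type*} (a b c d e f : α) : ![a,b,c,d,e,f] 5 = f := rfl
lemma vec6_m0 {α : Type*} (a b c d e f : α) (h : 0 < 6) : ![a,b,c,d,e,f] ⟨0,h⟩ = a := rfl
lemma vec6_m1 {α : Type*} (a b c d e f : α) (h : 1 < 6) : ![a,b,c,d,e,f] ⟨1,h⟩ = b := rfl
lemma vec6_m2 {α : Type*} (a b c d e f : α) (h : 2 < 6) : ![a,b,c,d,e,f] ⟨2,h⟩ = c := rfl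
lemma vec6_m3 {α : Type*} (a b c d e f : α) (h : 3 < 6) : ![a,b,c,d,e,f] ⟨3,h⟩ = d := rfl
lemma vec6_m4 {α : Type*} (a b c d e f : α) (h : 4 < 6) : ![a,b,c,d,e,f] ⟨4,h⟩ = e := rfl
lemma vec6_m5 {α : Type*} (a b c d e f : α) (h : 5 < 6) : ![a,b,c,d,e,f] ⟨5,h⟩ = f := rfl

/-- The squared norm of a vector in `ℝ³` is the sum of the squares of its coordinates. -/
lemma norm_sq_eq3 (w : EuclideanSpace ℝ (Fin 3)) : ‖w‖ ^ 2 = w 0 ^ 2 + w 1 ^ 2 + w 2 ^ 2 := by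
  rw [EuclideanSpace.norm_eq, Real.sq_sqrt (by positivity)]
  simp [Fin.sum_univ_three, sq_abs]

/-- If `D` is the matrix of squared distances between four points of `ℝ³` and `u` records the
squared distances from a fifth ("ghost") point `(gx, gy, gz)`, then the Cayley–Menger
polynomial vanishes.  This is proved by factoring the `6 × 6` Cayley–Menger matrix as a
product of two matrices of rank at most `5`. -/
lemma ghost_cm (D : Fin 4 → Fin 4 → ℝ) (u : Fin 4 → ℝ) (gx gy gz : ℝ) (X Y Z : Fin 4 → ℝ)
    (hD : ∀ i j, D i j = (X i - X j) ^ 2 + (Y i - Y j) ^ 2 + (Z i - Z j) ^ 2)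
    (hu : ∀ i, u i = (gx - X i) ^ 2 + (gy - Y i) ^ 2 + (gz - Z i) ^ 2) :
    cayleyMenger D u = 0 := by
  have key : (Matrix.of
    ![![0,    u 0,    u 1,    u 2,    u 3,    1],
      ![u 0,  D 0 0,  D 0 1,  D 0 2,  D 0 3,  1],
      ![u 1,  D 1 0,  D 1 1,  D 1 2,  D 1 3,  1],
      ![u 2,  D 2 0,  D 2 1,  D 2 2,  D 2 3,  1],
      ![u 3,  D 3 0,  D 3 1,  D 3 2,  D 3 3,  1],
      ![1,    1,      1,      1,      1,      0]] : Matrix (Fin 6) (Fin 6) ℝ)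
    = (Matrix.of
    ![![1, gx^2+gy^2+gz^2, -2*gx, -2*gy, -2*gz, 0],
      ![1, X 0^2+Y 0^2+Z 0^2, -2*X 0, -2*Y 0, -2*Z 0, 0],
      ![1, X 1^2+Y 1^2+Z 1^2, -2*X 1, -2*Y 1, -2*Z 1, 0],
      ![1, X 2^2+Y 2^2+Z 2^2, -2*X 2, -2*Y 2, -2*Z 2, 0],
      ![1, X 3^2+Y 3^2+Z 3^2, -2*X 3, -2*Y 3, -2*Z 3, 0],
      ![0, 1, 0, 0, 0, 0]]) * (Matrix.of
    ![![gx^2+gy^2+gz^2, X 0^2+Y 0^2+Z 0^2, X 1^2+Y 1^2+Z 1^2, X 2^2+Y 2^2+Z 2^2, X 3^2+Y 3^2+Z 3^2, 1],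
      ![1, 1, 1, 1, 1, 0],
      ![gx, X 0, X 1, X 2, X 3, 0],
      ![gy, Y 0, Y 1, Y 2, Y 3, 0],
      ![gz, Z 0, Z 1, Z 2, Z 3, 0],
      ![0, 0, 0, 0, 0, 0]]) := by
    ext i j
    fin_cases i <;> fin_cases j <;>
      simp only [Matrix.mul_apply, Fin.sum_univ_six, Matrix.of_apply,
        vec6_0, vec6_1, vec6_2, vec6_3, vec6_4, vec6_5,
        vec6_m0, vec6_m1, vec6_m2, vec6_m3, vec6_m4, vec6_m5, hD, hu] <;> ring
  rw [cayleyMenger, key, Matrix.det_mul,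
    Matrix.det_eq_zero_of_column_eq_zero 5 (fun i => by fin_cases i <;> rfl), zero_mul]

/-- For an unlucky stack, the Cayley–Menger relation is satisfied at
every vehicle position `φ_{θ,a,b,c}`. -/
theorem unluckyStack_cayleyMenger_vanishes
    (s m : Fin 4 → EuclideanSpace ℝ (Fin 3)) (h : UnluckyStack s m) :
    ∀ θ a b c : ℝ,
      cayleyMenger (fun i j => ‖m i - m j‖ ^ 2)
        (fun i => ‖s i - hoveringMotion θ a b c (m i)‖ ^ 2) = 0 := by
  obtain ⟨h0, h1, h2⟩ := h
  intro θ a b c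
  have hCS : Real.sin θ ^ 2 + Real.cos θ ^ 2 = 1 := Real.sin_sq_add_cos_sq θ
  refine ghost_cm _ _ (s 0 0) (s 0 1) (2 * m 0 2 + 2 * c - s 0 2)
    (fun k => m k 0 * Real.cos θ - m k 1 * Real.sin θ + a)
    (fun k => m k 0 * Real.sin θ + m k 1 * Real.cos θ + b)
    (fun k => m k 2 + c) ?_ ?_
  · intro i j
    rw [norm_sq_eq3]
    simp only [PiLp.sub_apply]
    linear_combination (-(m i 0 - m j 0) ^ 2 - (m i 1 - m j 1) ^ 2) * hCS
  · intro i
    rw [norm_sq_eq3]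
    simp only [PiLp.sub_apply, hoveringMotion, WithLp.ofLp_toLp, Matrix.cons_val_zero, Matrix.cons_val_one,
      Matrix.head_cons, Matrix.cons_val_two, Matrix.tail_cons]
    linear_combination
      (s i 0 + s 0 0 - 2 * (m i 0 * Real.cos θ - m i 1 * Real.sin θ + a)) * h0 i 0
      + (s i 1 + s 0 1 - 2 * (m i 0 * Real.sin θ + m i 1 * Real.cos θ + b)) * h1 i 0
      + (s i 2 - m i 2 - c - (2 * m 0 2 + c - s 0 2 - m i 2)) * h2 0 i
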